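/- arXiv:2203.16191 — 6 statements merged into one kernel-verified Lean document; each statement's English description precedes it below -/
import Mathlib

section
/- For a natural number N and real y, the reciprocal Gamma function satisfies |1/Γ(-N+iy)| ≤ |iy| · |1+iy| · |2+iy| ⋯ |N+iy| · e^{|y|^2}. -/
/-!
Iterating `Γ(s + 1) = s Γ(s)` in the form `1/Γ(s) = s/Γ(s + 1)`, which also holds at the poles,
gives `1/Γ(-N + iy) = (∏_{j ≤ N} (-N + iy + j)) / Γ(1 + iy)`, and the product has the moduli
`|k + iy|`, `k = 0, …, N`. For `1/Γ(1 + iy)` use Euler's limit formula: up to a factor tending to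
`1`, its `n`-th approximant has modulus `∏_{j ≤ n} |1 + iy/(j + 1)|`, and
`|1 + it| ≤ exp(t²/2)` with `∑ 1/j² = π²/6` bounds this by `exp(π²y²/12) ≤ exp(y²)`.
-/

open Complex Filter Finset
open scoped Real Nat Topology ComplexConjugate

theorem sum_range_inv_succ_sq_le (n : ℕ) : ∑ j ∈ range n, (((j : ℝ) + 1) ^ 2)⁻¹ ≤ π ^ 2 / 6 := by
  -- the `n = 0` term of `∑ 1 / n ^ 2` is `1 / 0 = 0`
  have := sum_le_hasSum (range (n + 1)) (fun i _ => by positivity) hasSum_zeta_two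
  simpa [sum_range_succ'] using this

namespace Complex

theorem inv_Gamma_eq_prod_mul_inv_Gamma_add_nat (s : ℂ) (n : ℕ) :
    (Gamma s)⁻¹ = (∏ j ∈ range n, (s + j)) * (Gamma (s + n))⁻¹ := by
  induction n with
  | zero => simp
  | succ n ih =>
    rw [ih, one_div_Gamma_eq_self_mul_one_div_Gamma_add_one (s + n), prod_range_succ, mul_assoc]
    push_cast
    ring_nf

theorem norm_add_mul_I_le {a : ℝ} (ha : 0 < a) (y : ℝ) :
    ‖(a : ℂ) + y * I‖ ≤ a * Real.exp (y ^ 2 / (2 * a ^ 2)) := by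
  have hexp : 1 + y ^ 2 / a ^ 2 ≤ Real.exp (y ^ 2 / (2 * a ^ 2)) ^ 2 := by
    rw [← Real.exp_nat_mul]
    push_cast
    have := Real.add_one_le_exp (y ^ 2 / a ^ 2)
    field_simp at this ⊢
    linarith
  rw [norm_add_mul_I, Real.sqrt_le_left (by positivity)]
  calc a ^ 2 + y ^ 2 = a ^ 2 * (1 + y ^ 2 / a ^ 2) := by field_simp
    _ ≤ a ^ 2 * Real.exp (y ^ 2 / (2 * a ^ 2)) ^ 2 := by gcongr
    _ = _ := by ring

theorem norm_inv_GammaSeq (s : ℂ) {n : ℕ} (hn : 0 < n) :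
    ‖(GammaSeq s n)⁻¹‖ = (∏ j ∈ range (n + 1), ‖s + j‖) / ((n : ℝ) ^ s.re * n !) := by
  rw [GammaSeq, inv_div, norm_div, norm_mul, norm_prod, norm_natCast_cpow_of_pos hn]
  simp

theorem prod_norm_one_add_mul_I_add_nat_le (y : ℝ) (n : ℕ) :
    ∏ j ∈ range n, ‖1 + y * I + j‖ ≤ n ! * Real.exp (π ^ 2 / 12 * y ^ 2) := by
  calc ∏ j ∈ range n, ‖1 + y * I + j‖
      ≤ ∏ j ∈ range n, ((j + 1 : ℝ) * Real.exp (y ^ 2 / (2 * (j + 1 : ℝ) ^ 2))) := by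
        refine prod_le_prod (fun _ _ => norm_nonneg _) fun j _ => ?_
        have hj : 1 + y * I + j = ((j + 1 : ℝ) : ℂ) + y * I := by push_cast; ring
        exact hj ▸ norm_add_mul_I_le (by positivity) y
    _ = n ! * Real.exp (y ^ 2 / 2 * ∑ j ∈ range n, (((j : ℝ) + 1) ^ 2)⁻¹) := by
        rw [prod_mul_distrib, ← Real.exp_sum, mul_sum, ← prod_range_add_one_eq_factorial]
        push_cast
        congr 2
        refine sum_congr rfl fun j _ => ?_
        field_simp
    _ ≤ n ! * Real.exp (y ^ 2 / 2 * (π ^ 2 / 6)) := by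
        gcongr
        exact sum_range_inv_succ_sq_le n
    _ = n ! * Real.exp (π ^ 2 / 12 * y ^ 2) := by ring_nf

theorem norm_inv_Gamma_one_add_mul_I_le (y : ℝ) :
    ‖(Gamma (1 + y * I))⁻¹‖ ≤ Real.exp (π ^ 2 / 12 * y ^ 2) := by
  set s : ℂ := 1 + y * I
  set C := Real.exp (π ^ 2 / 12 * y ^ 2)
  have hs : s.re = 1 := by simp [s]
  have hGammaSeq : Tendsto (fun n => ‖(GammaSeq s n)⁻¹‖) atTop (𝓝 ‖(Gamma s)⁻¹‖) :=
    ((GammaSeq_tendsto_Gamma s).inv₀ (Gamma_ne_zero_of_re_pos (by simp [hs]))).norm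
  have hbound : Tendsto (fun n : ℕ => (1 + 1 / (n : ℝ)) * C) atTop (𝓝 C) := by
    simpa only [add_zero, one_mul] using
      (tendsto_one_div_atTop_nhds_zero_nat.const_add 1).mul_const C
  refine le_of_tendsto_of_tendsto hGammaSeq hbound ?_
  filter_upwards [eventually_gt_atTop 0] with n hn
  rw [norm_inv_GammaSeq s hn, hs, Real.rpow_one, div_le_iff₀ (by positivity)]
  calc ∏ j ∈ range (n + 1), ‖s + j‖ ≤ (n + 1)! * C := prod_norm_one_add_mul_I_add_nat_le y (n + 1)
    _ = (1 + 1 / (n : ℝ)) * C * (n * n !) := by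
      rw [Nat.factorial_succ]
      push_cast
      field_simp

theorem prod_norm_neg_nat_add_mul_I_add_nat (N : ℕ) (y : ℝ) :
    ∏ j ∈ range (N + 1), ‖-(N : ℂ) + y * I + j‖ = ∏ k ∈ range (N + 1), ‖(k : ℂ) + y * I‖ := by
  rw [← prod_range_reflect]
  refine prod_congr rfl fun j hj => ?_
  have hjN : j ≤ N := Nat.lt_succ_iff.mp (mem_range.mp hj)
  have hreflect : -(N : ℂ) + y * I + (N + 1 - 1 - j : ℕ) = -conj ((j : ℂ) + y * I) := by
    apply Complex.ext <;> simp [Nat.cast_sub hjN]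
    ring
  rw [hreflect, norm_neg, norm_conj]

end Complex

theorem inv_Gamma_neg_nat_bound (N : ℕ) (y : ℝ) :
    ‖(Complex.Gamma (-(N : ℂ) + y * Complex.I))⁻¹‖
      ≤ (∏ k ∈ Finset.range (N + 1), ‖(k : ℂ) + y * Complex.I‖)
        * Real.exp (|y| ^ 2) := by
  have hshift : -(N : ℂ) + y * I + (N + 1 : ℕ) = 1 + y * I := by push_cast; ring
  rw [inv_Gamma_eq_prod_mul_inv_Gamma_add_nat _ (N + 1), hshift, norm_mul, norm_prod,
    prod_norm_neg_nat_add_mul_I_add_nat]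
  gcongr
  calc ‖(Gamma (1 + y * I))⁻¹‖ ≤ Real.exp (π ^ 2 / 12 * y ^ 2) := norm_inv_Gamma_one_add_mul_I_le y
    _ ≤ Real.exp (|y| ^ 2) := by
      rw [sq_abs]
      gcongr
      exact mul_le_of_le_one_left (sq_nonneg y) (by nlinarith [Real.pi_lt_d2, Real.pi_pos])
end

section
/- For complex ν with Re ν ≥ 0 and real x ≥ 1, there is a constant C depending only on Re ν such that |K_ν(x)| ≤ C e^{π|Im ν|} x^{-1/2} e^{-x}, where K_ν is given by the integral representation K_ν(x) = (π/2)^{1/2} x^ν e^{-x}/Γ(ν+1/2) ∫_0^∞ e^{-xτ}(τ+τ²/2)^{ν-1/2} dτ. -/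
open Complex MeasureTheory

/-- The modified Bessel function of the second kind for `Re ν > -1/2`, defined by the
integral representation
`K_ν(x) = (π/2)^{1/2} x^ν e^{-x} / Γ(ν+1/2) ∫_0^∞ e^{-xτ} (τ+τ²/2)^{ν-1/2} dτ`. -/
noncomputable def besselK (ν : ℂ) (x : ℝ) : ℂ :=
  (Real.sqrt (Real.pi / 2) : ℂ) * (x : ℂ) ^ ν * Real.exp (-x) / Complex.Gamma (ν + 1 / 2)
    * ∫ τ in Set.Ioi (0 : ℝ),
        (Real.exp (-x * τ) : ℂ) * ((τ : ℂ) + (τ : ℂ) ^ 2 / 2) ^ (ν - 1 / 2)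

/-!
Write `K_ν(x) = √(π/2) x^ν e^{-x} Γ(ν+1/2)⁻¹ J`, with `J` the integral. Since
`τ + τ²/2 = τ (1 + τ/2)`, the integrand of `J` is dominated by `2^p (τ^b + τ^{b+p}) e^{-xτ}` with
`b = Re ν - 1/2`, `p = max b 0`, so Euler's integral and `x ≥ 1` give `‖J‖ ≤ C x^{-(b+1)}`.

The factor `e^{π |Im ν|}` comes from the lower bound `‖Γ s‖ ≥ c e^{-π |Im s|}` on a vertical line
`Re s = σ ≥ 1/2`. The recurrence `Γ (s + 1) = s Γ s` moves `s` into the strip `1/2 ≤ Re s ≤ 3/2`,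
where `‖Γ‖ ≤ Γ (Re s) ≤ √π` by convexity of `Γ` on `(0, ∞)`, and the reflection formula
`Γ s Γ (2 - s) sin (π s) = π (1 - s)` with `‖sin w‖ ≤ ‖w‖ e^{|Im w|}` bounds `‖Γ s‖` from below.
-/

open Set Real

namespace Complex

lemma norm_cos_le_exp_abs_im (z : ℂ) : ‖cos z‖ ≤ Real.exp |z.im| := by
  have h₁ : ‖exp (z * I)‖ ≤ Real.exp |z.im| := by
    rw [norm_exp]; gcongr; simpa using neg_le_abs z.im
  have h₂ : ‖exp (-z * I)‖ ≤ Real.exp |z.im| := by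
    rw [norm_exp]; gcongr; simpa using le_abs_self z.im
  rw [cos, norm_div, Complex.norm_two]
  linarith [norm_add_le (exp (z * I)) (exp (-z * I))]

lemma norm_sin_le_mul_exp_abs_im (z : ℂ) : ‖sin z‖ ≤ ‖z‖ * Real.exp |z.im| := by
  let S : Set ℂ := im ⁻¹' Icc (-|z.im|) |z.im|
  have hS : Convex ℝ S := (convex_Icc _ _).linear_preimage imLm
  have hcos : ∀ w ∈ S, ‖deriv sin w‖ ≤ Real.exp |z.im| := fun w hw => by
    rw [deriv_sin]
    exact (norm_cos_le_exp_abs_im w).trans (Real.exp_le_exp.mpr (abs_le.mpr hw))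
  simpa [mul_comm] using hS.norm_image_sub_le_of_norm_deriv_le (fun w _ => differentiableAt_sin)
    hcos (show (0 : ℂ) ∈ S by simp [S]) (show z ∈ S by simp [S, neg_abs_le, le_abs_self])

lemma norm_Gamma_le_Gamma_re {s : ℂ} (hs : 0 < s.re) : ‖Gamma s‖ ≤ Real.Gamma s.re := by
  rw [Gamma_eq_integral hs, Real.Gamma_eq_integral hs, GammaIntegral]
  refine (norm_integral_le_integral_norm _).trans_eq (setIntegral_congr_fun measurableSet_Ioi ?_)
  intro x hx
  dsimp only
  rw [norm_mul, norm_real, Real.norm_of_nonneg (Real.exp_pos _).le,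
    norm_cpow_eq_rpow_re_of_pos hx, sub_re, one_re]

lemma norm_Gamma_le_sqrt_pi {s : ℂ} (h₁ : 1 / 2 ≤ s.re) (h₂ : s.re ≤ 3 / 2) :
    ‖Gamma s‖ ≤ √π := by
  have hΓ : Real.Gamma s.re ≤ max (Real.Gamma (1 / 2)) (Real.Gamma (3 / 2)) :=
    Real.convexOn_Gamma.le_max_of_mem_Icc (by norm_num) (by norm_num) ⟨h₁, h₂⟩
  have h32 : Real.Gamma (3 / 2) = Real.Gamma (1 / 2) / 2 := by
    rw [show (3 / 2 : ℝ) = 1 / 2 + 1 by norm_num, Real.Gamma_add_one (by norm_num)]; ring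
  have hpos := Real.Gamma_pos_of_pos (show (0 : ℝ) < 1 / 2 by norm_num)
  rw [h32, max_eq_left (by linarith), Real.Gamma_one_half_eq] at hΓ
  exact (norm_Gamma_le_Gamma_re (by linarith)).trans hΓ

lemma norm_Gamma_mul_pow_le_norm_Gamma_add_nat {s : ℂ} {c : ℝ} (hc : 0 < c) (hs : c ≤ s.re)
    (m : ℕ) : ‖Gamma s‖ * c ^ m ≤ ‖Gamma (s + m)‖ := by
  induction m with
  | zero => simp
  | succ n ih =>
    have hre : c ≤ (s + n).re := by simp; linarith [n.cast_nonneg (α := ℝ)]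
    have hne : s + n ≠ 0 := fun h => by simp [h] at hre; linarith
    rw [Nat.cast_succ, ← add_assoc, Gamma_add_one _ hne, norm_mul, pow_succ]
    calc ‖Gamma s‖ * (c ^ n * c) = ‖Gamma s‖ * c ^ n * c := (mul_assoc _ _ _).symm
      _ ≤ ‖Gamma (s + n)‖ * c := by gcongr
      _ ≤ ‖Gamma (s + n)‖ * ‖s + n‖ := by gcongr; exact hre.trans (re_le_norm _)
      _ = ‖s + n‖ * ‖Gamma (s + n)‖ := mul_comm _ _

lemma exp_neg_div_sqrt_pi_le_norm_Gamma {s : ℂ} (h₁ : 1 / 2 ≤ s.re) (h₂ : s.re ≤ 3 / 2)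
    (him : s.im ≠ 0) : Real.exp (-(π * |s.im|)) / √π ≤ ‖Gamma s‖ := by
  have hs : 1 - s ≠ 0 := fun h => him (by simpa using congrArg im h)
  have hsin : sin (π * s) ≠ 0 := fun h => by
    obtain ⟨k, hk⟩ := sin_eq_zero_iff.mp h
    exact him (by simpa [ofReal_ne_zero.mpr pi_ne_zero] using congrArg im hk.symm)
  -- the reflection formula, shifted to `Γ (2 - s)` so that `2 - s` stays in the strip
  have hreflect : Gamma s * Gamma (2 - s) * sin (π * s) = π * (1 - s) := by
    rw [show (2 : ℂ) - s = 1 - s + 1 by ring, Gamma_add_one _ hs]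
    rw [show Gamma s * ((1 - s) * Gamma (1 - s)) = (1 - s) * (Gamma s * Gamma (1 - s)) by ring,
      Gamma_mul_Gamma_one_sub, mul_assoc, div_mul_cancel₀ _ hsin, mul_comm]
  have hsin_le : ‖sin (π * s)‖ ≤ π * ‖1 - s‖ * Real.exp (π * |s.im|) := by
    rw [← sin_pi_sub, show (π : ℂ) - π * s = π * (1 - s) by ring]
    refine (norm_sin_le_mul_exp_abs_im _).trans_eq ?_
    simp [abs_of_pos pi_pos, abs_neg]
  have hΓ2 : ‖Gamma (2 - s)‖ ≤ √π := norm_Gamma_le_sqrt_pi (by simp; linarith) (by simp; linarith)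
  have key : π * ‖1 - s‖ ≤ π * ‖1 - s‖ * (‖Gamma s‖ * √π * Real.exp (π * |s.im|)) := by
    calc π * ‖1 - s‖ = ‖Gamma s‖ * ‖Gamma (2 - s)‖ * ‖sin (π * s)‖ := by
          simpa [abs_of_pos pi_pos] using (congrArg norm hreflect).symm
      _ ≤ ‖Gamma s‖ * √π * (π * ‖1 - s‖ * Real.exp (π * |s.im|)) := by gcongr
      _ = _ := by ring
  have hpos : 0 < π * ‖1 - s‖ := mul_pos pi_pos (norm_pos_iff.mpr hs)
  have hone : 1 ≤ ‖Gamma s‖ * √π * Real.exp (π * |s.im|) :=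
    le_of_mul_le_mul_left (by rwa [mul_one]) hpos
  rw [div_le_iff₀ (by positivity), Real.exp_neg, inv_le_iff_one_le_mul₀ (Real.exp_pos _)]
  linarith

lemma exists_pos_mul_exp_neg_le_norm_Gamma {σ : ℝ} (hσ : 1 / 2 ≤ σ) :
    ∃ c > 0, ∀ s : ℂ, s.re = σ → c * Real.exp (-(π * |s.im|)) ≤ ‖Gamma s‖ := by
  set m := ⌊σ - 1 / 2⌋₊
  have hm₁ : (m : ℝ) ≤ σ - 1 / 2 := Nat.floor_le (by linarith)
  have hm₂ : σ - 1 / 2 < m + 1 := Nat.lt_floor_add_one _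
  have hΓσ : 0 < Real.Gamma σ := Real.Gamma_pos_of_pos (by linarith)
  refine ⟨min (Real.Gamma σ) ((1 / 2) ^ m / √π), lt_min hΓσ (by positivity), fun s hs => ?_⟩
  rcases eq_or_ne s.im 0 with him | him
  · have : s = (σ : ℂ) := Complex.ext (by simp [hs]) (by simp [him])
    rw [him, this, Gamma_ofReal, norm_real, Real.norm_of_nonneg hΓσ.le]
    simp
  · have hstrip := exp_neg_div_sqrt_pi_le_norm_Gamma (s := s - m)
      (by simp; linarith) (by simp; linarith) (by simpa using him)
    have hshift := norm_Gamma_mul_pow_le_norm_Gamma_add_nat (s := s - m) (c := 1 / 2)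
      (by norm_num) (by simp; linarith) m
    rw [sub_add_cancel] at hshift
    rw [sub_im, natCast_im, sub_zero] at hstrip
    calc min (Real.Gamma σ) ((1 / 2) ^ m / √π) * Real.exp (-(π * |s.im|))
        ≤ (1 / 2) ^ m / √π * Real.exp (-(π * |s.im|)) := by gcongr; exact min_le_right _ _
      _ = (Real.exp (-(π * |s.im|)) / √π) * (1 / 2) ^ m := by ring
      _ ≤ ‖Gamma (s - m)‖ * (1 / 2) ^ m := by gcongr
      _ ≤ ‖Gamma s‖ := hshift

end Complex

lemma one_add_div_two_rpow_le {τ : ℝ} (hτ : 0 ≤ τ) (b : ℝ) :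
    (1 + τ / 2) ^ b ≤ 2 ^ max b 0 * (1 + τ ^ max b 0) := by
  rcases le_total b 0 with hb | hb
  · rw [max_eq_right hb, rpow_zero, rpow_zero]
    linarith [rpow_le_one_of_one_le_of_nonpos (by linarith : (1 : ℝ) ≤ 1 + τ / 2) hb]
  · rw [max_eq_left hb]
    have hτb := rpow_nonneg hτ b
    rcases le_total τ 1 with h1 | h1
    · calc (1 + τ / 2) ^ b ≤ 2 ^ b := by gcongr; linarith
        _ ≤ 2 ^ b * (1 + τ ^ b) := le_mul_of_one_le_right (by positivity) (by linarith)
    · calc (1 + τ / 2) ^ b ≤ (2 * τ) ^ b := by gcongr; linarith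
        _ = 2 ^ b * τ ^ b := mul_rpow (by norm_num) hτ
        _ ≤ 2 ^ b * (1 + τ ^ b) := by gcongr; linarith

lemma add_sq_div_two_rpow_le {τ : ℝ} (hτ : 0 < τ) (b : ℝ) :
    (τ + τ ^ 2 / 2) ^ b ≤ 2 ^ max b 0 * (τ ^ b + τ ^ (b + max b 0)) := by
  rw [show τ + τ ^ 2 / 2 = τ * (1 + τ / 2) by ring, mul_rpow hτ.le (by positivity),
    rpow_add hτ]
  calc τ ^ b * (1 + τ / 2) ^ b ≤ τ ^ b * (2 ^ max b 0 * (1 + τ ^ max b 0)) := by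
        gcongr; exact one_add_div_two_rpow_le hτ.le b
    _ = _ := by ring

lemma integral_rpow_mul_exp_neg_mul_Ioi_eq_Gamma_mul {b x : ℝ} (hb : -1 < b) (hx : 0 < x) :
    ∫ τ in Ioi 0, τ ^ b * Real.exp (-(x * τ)) = Real.Gamma (b + 1) * x ^ (-(b + 1)) := by
  have := Real.integral_rpow_mul_exp_neg_mul_Ioi (a := b + 1) (by linarith) hx
  rw [add_sub_cancel_right] at this
  rw [this, one_div, inv_rpow hx.le, rpow_neg hx.le, mul_comm]

lemma integrableOn_rpow_mul_exp_neg_mul {b x : ℝ} (hb : -1 < b) (hx : 0 < x) :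
    IntegrableOn (fun τ : ℝ => τ ^ b * Real.exp (-(x * τ))) (Ioi 0) := by
  simpa using integrableOn_rpow_mul_exp_neg_mul_rpow hb one_pos hx

noncomputable def besselKIntegral (ν : ℂ) (x : ℝ) : ℂ :=
  ∫ τ in Ioi (0 : ℝ), (Real.exp (-x * τ) : ℂ) * ((τ : ℂ) + (τ : ℂ) ^ 2 / 2) ^ (ν - 1 / 2)

lemma norm_besselKIntegral_le {ν : ℂ} {b x : ℝ} (hν : ν.re = b + 1 / 2) (hb : -1 < b)
    (hx : 1 ≤ x) :
    ‖besselKIntegral ν x‖ ≤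
      2 ^ max b 0 * (Real.Gamma (b + 1) + Real.Gamma (b + max b 0 + 1)) * x ^ (-(b + 1)) := by
  have hx₀ : 0 < x := one_pos.trans_le hx
  set p := max b 0
  have hbp : -1 < b + p := by linarith [le_max_right b 0]
  have hint := integrableOn_rpow_mul_exp_neg_mul hb hx₀
  have hint' := integrableOn_rpow_mul_exp_neg_mul hbp hx₀
  have hre : (ν - 1 / 2).re = b := by simp [hν]
  have hpt : ∀ τ ∈ Ioi (0 : ℝ),
      ‖(Real.exp (-x * τ) : ℂ) * ((τ : ℂ) + (τ : ℂ) ^ 2 / 2) ^ (ν - 1 / 2)‖ ≤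
        2 ^ p * (τ ^ b * Real.exp (-(x * τ)) + τ ^ (b + p) * Real.exp (-(x * τ))) := by
    intro τ (hτ : 0 < τ)
    have hcast : (τ : ℂ) + (τ : ℂ) ^ 2 / 2 = ((τ + τ ^ 2 / 2 : ℝ) : ℂ) := by push_cast; rfl
    rw [hcast, norm_mul, norm_real, Real.norm_of_nonneg (Real.exp_pos _).le,
      norm_cpow_eq_rpow_re_of_pos (by positivity), hre, neg_mul]
    calc Real.exp (-(x * τ)) * (τ + τ ^ 2 / 2) ^ b
        ≤ Real.exp (-(x * τ)) * (2 ^ p * (τ ^ b + τ ^ (b + p))) := by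
          gcongr; exact add_sq_div_two_rpow_le hτ b
      _ = _ := by ring
  calc ‖besselKIntegral ν x‖
      ≤ ∫ τ in Ioi 0, 2 ^ p * (τ ^ b * Real.exp (-(x * τ)) + τ ^ (b + p) * Real.exp (-(x * τ))) :=
        norm_integral_le_of_norm_le ((hint.add hint').const_mul _)
          (ae_restrict_of_forall_mem measurableSet_Ioi hpt)
    _ = 2 ^ p * (Real.Gamma (b + 1) * x ^ (-(b + 1)) +
          Real.Gamma (b + p + 1) * x ^ (-(b + p + 1))) := by
        rw [integral_const_mul, integral_add hint hint',
          integral_rpow_mul_exp_neg_mul_Ioi_eq_Gamma_mul hb hx₀,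
          integral_rpow_mul_exp_neg_mul_Ioi_eq_Gamma_mul hbp hx₀]
    _ ≤ 2 ^ p * (Real.Gamma (b + 1) * x ^ (-(b + 1)) +
          Real.Gamma (b + p + 1) * x ^ (-(b + 1))) := by
        gcongr
        · exact (Real.Gamma_pos_of_pos (by linarith)).le
        · exact le_add_of_nonneg_right (le_max_right b 0)
    _ = _ := by ring

lemma norm_besselK (ν : ℂ) {x : ℝ} (hx : 0 < x) :
    ‖besselK ν x‖ =
      √(π / 2) * x ^ ν.re * Real.exp (-x) / ‖Gamma (ν + 1 / 2)‖ * ‖besselKIntegral ν x‖ := by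
  rw [besselK, ← besselKIntegral, norm_mul, norm_div, norm_mul, norm_mul, norm_real, norm_real,
    norm_cpow_eq_rpow_re_of_pos hx, Real.norm_of_nonneg (sqrt_nonneg _),
    Real.norm_of_nonneg (Real.exp_pos _).le]

theorem besselK_bound_large (a : ℝ) (ha : 0 ≤ a) :
    ∃ C : ℝ, ∀ ν : ℂ, ν.re = a → ∀ x : ℝ, 1 ≤ x →
      ‖besselK ν x‖
        ≤ C * Real.exp (Real.pi * |ν.im|) * x ^ (-(1 / 2 : ℝ)) * Real.exp (-x) := by
  obtain ⟨c, hc, hΓ⟩ := Complex.exists_pos_mul_exp_neg_le_norm_Gamma (σ := a + 1 / 2) (by linarith)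
  set b := a - 1 / 2 with hb
  set C := 2 ^ max b 0 * (Real.Gamma (b + 1) + Real.Gamma (b + max b 0 + 1))
  refine ⟨√(π / 2) * C / c, fun ν hν x hx => ?_⟩
  have hx₀ : 0 < x := one_pos.trans_le hx
  have hI : ‖besselKIntegral ν x‖ ≤ C * x ^ (-(b + 1)) :=
    norm_besselKIntegral_le (by rw [hν, hb]; ring) (by linarith) hx
  have hG : c * Real.exp (-(π * |ν.im|)) ≤ ‖Gamma (ν + 1 / 2)‖ := by
    simpa using hΓ (ν + 1 / 2) (by simp [hν])
  have hpow : x ^ a * x ^ (-(b + 1)) = x ^ (-(1 / 2 : ℝ)) := by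
    rw [← rpow_add hx₀, hb]; ring_nf
  rw [norm_besselK ν hx₀, hν]
  calc √(π / 2) * x ^ a * Real.exp (-x) / ‖Gamma (ν + 1 / 2)‖ * ‖besselKIntegral ν x‖
      ≤ √(π / 2) * x ^ a * Real.exp (-x) / (c * Real.exp (-(π * |ν.im|))) *
          (C * x ^ (-(b + 1))) := by gcongr
    _ = √(π / 2) * C / c * Real.exp (π * |ν.im|) * (x ^ a * x ^ (-(b + 1))) * Real.exp (-x) := by
      rw [Real.exp_neg (π * |ν.im|)]; field_simp
    _ = _ := by rw [hpow]
end

section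
/- For real x > 0 and s ≠ 0, the truncated Gamma-type integral satisfies |∫_x^∞ e^{-t} t^{2is-1} dt| ≤ C/|s| for an absolute constant C, obtained by integration by parts. -/
/-!
Write `c = 2is`. Integrating by parts with `d(t^c) = c t^(c-1) dt` gives
`c ∫_x^∞ e^(-t) t^(c-1) dt = ∫_x^∞ e^(-t) t^c dt - e^(-x) x^c`, and since `Re c = 0` both terms on
the right have modulus at most `e^(-x) ≤ 1`. Hence the integral is at most `2 / |c| = 1 / |s|`.
-/

open Complex MeasureTheory Set Filter Topology

section

variable {x t : ℝ} {c : ℂ}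

lemma norm_exp_neg_mul_cpow_le (hx : 0 < x) (hxt : x ≤ t) (hc : c.re ≤ 0) :
    ‖(Real.exp (-t) : ℂ) * (t : ℂ) ^ c‖ ≤ x ^ c.re * Real.exp (-t) := by
  rw [norm_mul, norm_real, Real.norm_of_nonneg (Real.exp_pos _).le,
    norm_cpow_eq_rpow_re_of_pos (hx.trans_le hxt), mul_comm]
  exact mul_le_mul_of_nonneg_right (Real.rpow_le_rpow_of_nonpos hx hxt hc) (Real.exp_pos _).le

lemma integrableOn_exp_neg_mul_cpow_Ioi (hx : 0 < x) (hc : c.re ≤ 0) :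
    IntegrableOn (fun t : ℝ => (Real.exp (-t) : ℂ) * (t : ℂ) ^ c) (Ioi x) := by
  refine Integrable.mono' ((integrableOn_exp_neg_Ioi x).const_mul (x ^ c.re)) ?_ ?_
  · refine ContinuousOn.aestronglyMeasurable (fun t ht => ?_) measurableSet_Ioi
    exact ((continuous_ofReal.comp (Real.continuous_exp.comp continuous_neg)).continuousAt.mul
      (continuousAt_ofReal_cpow_const t c (Or.inr (hx.trans ht).ne'))).continuousWithinAt
  · filter_upwards [ae_restrict_mem measurableSet_Ioi] with t ht
    simpa using norm_exp_neg_mul_cpow_le hx (le_of_lt ht) hc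

lemma tendsto_exp_neg_mul_cpow_atTop (hx : 0 < x) (hc : c.re ≤ 0) :
    Tendsto (fun t : ℝ => (Real.exp (-t) : ℂ) * (t : ℂ) ^ c) atTop (𝓝 0) := by
  refine squeeze_zero_norm' ?_ (by simpa using
    Real.tendsto_exp_neg_atTop_nhds_zero.const_mul (x ^ c.re))
  filter_upwards [eventually_ge_atTop x] with t ht
  exact norm_exp_neg_mul_cpow_le hx ht hc

lemma hasDerivAt_exp_neg_mul_cpow (ht : 0 < t) :
    HasDerivAt (fun t : ℝ => (Real.exp (-t) : ℂ) * (t : ℂ) ^ c)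
      (c * ((Real.exp (-t) : ℂ) * (t : ℂ) ^ (c - 1)) - (Real.exp (-t) : ℂ) * (t : ℂ) ^ c) t := by
  have hexp : HasDerivAt (fun t : ℝ => (Real.exp (-t) : ℂ)) (-Real.exp (-t) : ℂ) t := by
    simpa using ((Real.hasDerivAt_exp (-t)).comp t (hasDerivAt_neg t)).ofReal_comp
  have hpow : HasDerivAt (fun t : ℝ => (t : ℂ) ^ c) (c * (t : ℂ) ^ (c - 1)) t := by
    simpa using
      ((hasDerivAt_id (t : ℂ)).cpow_const (c := c) (ofReal_mem_slitPlane.2 ht)).comp_ofReal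
  exact (hexp.mul hpow).congr_deriv (by ring)

theorem mul_integral_exp_neg_mul_cpow_sub_one_Ioi (hx : 0 < x) (hc : c.re ≤ 0) :
    c * ∫ t in Ioi x, (Real.exp (-t) : ℂ) * (t : ℂ) ^ (c - 1) =
      (∫ t in Ioi x, (Real.exp (-t) : ℂ) * (t : ℂ) ^ c) - (Real.exp (-x) : ℂ) * (x : ℂ) ^ c := by
  have hint₁ := integrableOn_exp_neg_mul_cpow_Ioi hx (c := c - 1)
    (by rw [sub_re, one_re]; linarith)
  have hint := integrableOn_exp_neg_mul_cpow_Ioi hx hc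
  have hftc := integral_Ioi_of_hasDerivAt_of_tendsto'
    (fun t ht => hasDerivAt_exp_neg_mul_cpow (hx.trans_le ht)) ((hint₁.const_mul c).sub hint)
    (tendsto_exp_neg_mul_cpow_atTop hx hc)
  rw [integral_sub (hint₁.const_mul c) hint, integral_const_mul] at hftc
  linear_combination hftc

lemma norm_integral_exp_neg_mul_cpow_Ioi_le (hx : 0 < x) (hc : c.re ≤ 0) :
    ‖∫ t in Ioi x, (Real.exp (-t) : ℂ) * (t : ℂ) ^ c‖ ≤ x ^ c.re * Real.exp (-x) := by
  calc ‖∫ t in Ioi x, (Real.exp (-t) : ℂ) * (t : ℂ) ^ c‖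
      ≤ ∫ t in Ioi x, x ^ c.re * Real.exp (-t) := by
        refine norm_integral_le_of_norm_le ((integrableOn_exp_neg_Ioi x).const_mul _) ?_
        filter_upwards [ae_restrict_mem measurableSet_Ioi] with t ht
        exact norm_exp_neg_mul_cpow_le hx (le_of_lt ht) hc
    _ = x ^ c.re * Real.exp (-x) := by rw [integral_const_mul, integral_exp_neg_Ioi]

theorem norm_mul_integral_exp_neg_mul_cpow_sub_one_Ioi_le (hx : 0 < x) (hc : c.re ≤ 0) :
    ‖c‖ * ‖∫ t in Ioi x, (Real.exp (-t) : ℂ) * (t : ℂ) ^ (c - 1)‖ ≤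
      2 * (x ^ c.re * Real.exp (-x)) := by
  rw [← norm_mul, mul_integral_exp_neg_mul_cpow_sub_one_Ioi hx hc, two_mul]
  refine (norm_sub_le _ _).trans (add_le_add (norm_integral_exp_neg_mul_cpow_Ioi_le hx hc) ?_)
  exact norm_exp_neg_mul_cpow_le hx le_rfl hc

end

theorem truncated_gamma_integral_bound_inv_s :
    ∃ C : ℝ, ∀ x : ℝ, 0 < x → ∀ s : ℝ, s ≠ 0 →
      ‖∫ t in Set.Ioi x,
          (Real.exp (-t) : ℂ) * (t : ℂ) ^ (2 * (s : ℂ) * Complex.I - 1)‖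
        ≤ C / |s| := by
  refine ⟨1, fun x hx s hs => ?_⟩
  have hre : (2 * (s : ℂ) * I).re = 0 := by simp
  have hnorm : ‖2 * (s : ℂ) * I‖ = 2 * |s| := by simp
  have hbound := norm_mul_integral_exp_neg_mul_cpow_sub_one_Ioi_le hx hre.le
  rw [hre, hnorm, Real.rpow_zero, one_mul] at hbound
  have hexp : Real.exp (-x) ≤ 1 := Real.exp_le_one_iff.2 (by linarith)
  rw [le_div_iff₀ (abs_pos.2 hs)]
  linarith
end

section
/- Fix μ real, c > 0, and let ν = μ + is with s ≠ 0. Define h(r) = Σ_{j≥0} d_j² r^j with d_j² = 2^{-ν-2j}/(j! Γ(j+1+ν)). Then for every p ∈ ℕ and 0 < r ≤ 1, |∂_r^p h(r)| ≤ C e^{π|s|} for a constant C depending only on μ and p. -/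
/-!
Write `h(r) = ∑ c_j r^j`. By the reflection formula, `1/Γ(z) = Γ(2 - z) · sin(π(1 - z)) / (π(1 - z))`,
and `|sin w / w| ≤ e^{|Im w|}` (mean value theorem, `|cos| ≤ e^{|Im|}` on a horizontal strip), so
`|1/Γ(z)| ≤ K e^{π|Im z|}` on a vertical strip `2 - b ≤ Re z ≤ 3/2`. Moving right by one costs at most
a factor `2`, because `Γ(z) = (z - 1) Γ(z - 1)` with `|z - 1| ≥ 1/2`. Hence
`|c_j| ≤ A e^{π|s|} 2^{-j} / j!`. A bound `|c_j| ≤ M ρ^j / j!` survives termwise differentiation with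
`M` replaced by `M ρ`, so `|h^{(p)}(r)| ≤ A e^{π|s|} 2^{-p} e^{|r|/2}`.
-/

open Complex
open scoped Real Nat

noncomputable def derivCoeff (c : ℕ → ℂ) (j : ℕ) : ℂ := (j + 1) * c (j + 1)

noncomputable def realPowerSeries (c : ℕ → ℂ) (t : ℝ) : ℂ := ∑' j, c j * (t : ℂ) ^ j

section PowerSeries

variable {c : ℕ → ℂ} {M ρ : ℝ}

lemma norm_derivCoeff_le (hc : ∀ j, ‖c j‖ ≤ M * ρ ^ j / j !) (j : ℕ) :
    ‖derivCoeff c j‖ ≤ M * ρ * ρ ^ j / j ! := by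
  have hj : (0 : ℝ) < j + 1 := by positivity
  calc ‖derivCoeff c j‖ = (j + 1) * ‖c (j + 1)‖ := by
        rw [derivCoeff, norm_mul]; norm_cast
    _ ≤ (j + 1) * (M * ρ ^ (j + 1) / (j + 1) !) := by gcongr; exact hc _
    _ = M * ρ * ρ ^ j / j ! := by
        rw [Nat.factorial_succ]; push_cast; field_simp; ring

lemma norm_iterate_derivCoeff_le (hc : ∀ j, ‖c j‖ ≤ M * ρ ^ j / j !) (p j : ℕ) :
    ‖derivCoeff^[p] c j‖ ≤ M * ρ ^ p * ρ ^ j / j ! := by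
  induction p generalizing j with
  | zero => simpa using hc j
  | succ p ih =>
    rw [Function.iterate_succ_apply', pow_succ, ← mul_assoc]
    exact norm_derivCoeff_le ih j

lemma norm_mul_pow_le (hc : ∀ j, ‖c j‖ ≤ M * ρ ^ j / j !) (t : ℝ) (j : ℕ) :
    ‖c j * (t : ℂ) ^ j‖ ≤ M * ((ρ * |t|) ^ j / j !) := by
  rw [norm_mul, norm_pow, Complex.norm_real, Real.norm_eq_abs, mul_pow]
  calc ‖c j‖ * |t| ^ j ≤ M * ρ ^ j / j ! * |t| ^ j := by gcongr; exact hc j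
    _ = M * (ρ ^ j * |t| ^ j / j !) := by ring

lemma summable_norm_mul_pow (hc : ∀ j, ‖c j‖ ≤ M * ρ ^ j / j !) (t : ℝ) :
    Summable fun j => ‖c j * (t : ℂ) ^ j‖ :=
  .of_nonneg_of_le (fun _ => norm_nonneg _) (norm_mul_pow_le hc t)
    ((Real.summable_pow_div_factorial _).mul_left M)

lemma norm_realPowerSeries_le (hc : ∀ j, ‖c j‖ ≤ M * ρ ^ j / j !) (t : ℝ) :
    ‖realPowerSeries c t‖ ≤ M * Real.exp (ρ * |t|) := by
  have hexp := (NormedSpace.expSeries_div_hasSum_exp (ρ * |t|)).mul_left M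
  rw [← Real.exp_eq_exp_ℝ] at hexp
  calc ‖realPowerSeries c t‖ ≤ ∑' j, ‖c j * (t : ℂ) ^ j‖ :=
        norm_tsum_le_tsum_norm (summable_norm_mul_pow hc t)
    _ ≤ ∑' j, M * ((ρ * |t|) ^ j / j !) :=
        (summable_norm_mul_pow hc t).tsum_le_tsum (norm_mul_pow_le hc t) hexp.summable
    _ = M * Real.exp (ρ * |t|) := hexp.tsum_eq

lemma realPowerSeries_eq_add_tsum (hc : ∀ j, ‖c j‖ ≤ M * ρ ^ j / j !) (t : ℝ) :
    realPowerSeries c t = c 0 + ∑' j, c (j + 1) * (t : ℂ) ^ (j + 1) := by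
  rw [realPowerSeries, (summable_norm_mul_pow hc t).of_norm.tsum_eq_zero_add, pow_zero, mul_one]

lemma hasDerivAt_realPowerSeries (hc : ∀ j, ‖c j‖ ≤ M * ρ ^ j / j !) (r : ℝ) :
    HasDerivAt (realPowerSeries c) (realPowerSeries (derivCoeff c) r) r := by
  set R := |r| + 1
  have hterm (j : ℕ) (t : ℝ) : HasDerivAt (fun t : ℝ => c (j + 1) * (t : ℂ) ^ (j + 1))
      (derivCoeff c j * (t : ℂ) ^ j) t := by
    refine (((hasDerivAt_pow (j + 1) (t : ℂ)).comp_ofReal).const_mul (c (j + 1))).congr_deriv ?_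
    rw [derivCoeff, Nat.add_sub_cancel]; push_cast; ring
  have hbound (j : ℕ) (t : ℝ) (ht : t ∈ Metric.ball (0 : ℝ) R) :
      ‖derivCoeff c j * (t : ℂ) ^ j‖ ≤ ‖derivCoeff c j * (R : ℂ) ^ j‖ := by
    simp only [norm_mul, norm_pow, Complex.norm_real, Real.norm_eq_abs,
      abs_of_pos (by positivity : 0 < R)]
    gcongr
    exact (by simpa using ht : |t| < R).le
  have hseries := hasDerivAt_tsum_of_isPreconnected
    (summable_norm_mul_pow (norm_derivCoeff_le hc) R) Metric.isOpen_ball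
    (convex_ball (0 : ℝ) R).isPreconnected (fun j t _ => hterm j t) hbound
    (Metric.mem_ball_self (by positivity)) (by simp) (y := r) (by simp [R])
  exact (hseries.const_add (c 0)).congr_of_eventuallyEq
    (.of_forall fun t => realPowerSeries_eq_add_tsum hc t)

lemma iteratedDeriv_realPowerSeries (hc : ∀ j, ‖c j‖ ≤ M * ρ ^ j / j !) (p : ℕ) :
    iteratedDeriv p (realPowerSeries c) = realPowerSeries (derivCoeff^[p] c) := by
  induction p generalizing c M with
  | zero => rfl
  | succ p ih =>
    have hderiv : deriv (realPowerSeries c) = realPowerSeries (derivCoeff c) :=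
      funext fun r => (hasDerivAt_realPowerSeries hc r).deriv
    rw [iteratedDeriv_succ', hderiv, ih (norm_derivCoeff_le hc), Function.iterate_succ_apply]

lemma norm_iteratedDeriv_realPowerSeries_le (hc : ∀ j, ‖c j‖ ≤ M * ρ ^ j / j !) (p : ℕ)
    (t : ℝ) : ‖iteratedDeriv p (realPowerSeries c) t‖ ≤ M * ρ ^ p * Real.exp (ρ * |t|) := by
  rw [iteratedDeriv_realPowerSeries hc]
  exact norm_realPowerSeries_le (norm_iterate_derivCoeff_le hc p) t

end PowerSeries

namespace Complex

lemma norm_cos_le_exp_abs_im_s16 (w : ℂ) : ‖cos w‖ ≤ Real.exp |w.im| := by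
  have h₁ : ‖exp (w * I)‖ ≤ Real.exp |w.im| := by
    rw [norm_exp]; simpa using neg_le_abs w.im
  have h₂ : ‖exp (-w * I)‖ ≤ Real.exp |w.im| := by
    rw [norm_exp]; simpa using le_abs_self w.im
  calc ‖cos w‖ = ‖exp (w * I) + exp (-w * I)‖ / 2 := by rw [cos, norm_div, RCLike.norm_ofNat]
    _ ≤ (Real.exp |w.im| + Real.exp |w.im|) / 2 := by gcongr; exact norm_add_le_of_le h₁ h₂
    _ = Real.exp |w.im| := by ring

lemma norm_sin_le_exp_abs_im_mul_norm (z : ℂ) : ‖sin z‖ ≤ Real.exp |z.im| * ‖z‖ := by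
  have hstrip : Convex ℝ {w : ℂ | |w.im| ≤ |z.im|} := by
    have : {w : ℂ | |w.im| ≤ |z.im|} = imLm ⁻¹' Set.Icc (-|z.im|) |z.im| := by
      ext; simp [abs_le]
    exact this ▸ (convex_Icc _ _).linear_preimage imLm
  simpa using hstrip.norm_image_sub_le_of_norm_deriv_le (fun w _ => differentiableAt_sin)
    (fun w hw => by
      rw [deriv_sin]; exact (norm_cos_le_exp_abs_im_s16 w).trans (Real.exp_le_exp.mpr hw))
    (x := 0) (by simp) (le_refl |z.im|)

lemma norm_sin_div_self_le (w : ℂ) : ‖sin w / w‖ ≤ Real.exp |w.im| := by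
  rw [norm_div]
  exact div_le_of_le_mul₀ (norm_nonneg _) (Real.exp_pos _).le (norm_sin_le_exp_abs_im_mul_norm w)

lemma norm_Gamma_le_Gamma_re_s16 {z : ℂ} (hz : 0 < z.re) : ‖Gamma z‖ ≤ Real.Gamma z.re := by
  rw [Gamma_eq_integral hz, Real.Gamma_eq_integral hz, GammaIntegral]
  refine (MeasureTheory.norm_integral_le_integral_norm _).trans_eq ?_
  refine MeasureTheory.setIntegral_congr_fun measurableSet_Ioi fun x hx => ?_
  rw [norm_mul, norm_real, Real.norm_of_nonneg (Real.exp_pos _).le,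
    norm_cpow_eq_rpow_re_of_pos hx, sub_re, one_re]

lemma inv_Gamma_eq_Gamma_two_sub_mul {z : ℂ} (hz : z.im ≠ 0) :
    (Gamma z)⁻¹ = Gamma (2 - z) * (sin (π * (1 - z)) / (π * (1 - z))) := by
  have h1z : 1 - z ≠ 0 := fun h => hz (by simpa using congrArg im h)
  have hsin : sin (π * z) ≠ 0 := by
    rw [Ne, sin_eq_zero_iff]
    rintro ⟨k, hk⟩
    apply hz
    simpa [Real.pi_ne_zero] using congrArg im hk
  have hΓ : Gamma z ≠ 0 := Gamma_ne_zero fun m h => hz (by simp [h])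
  rw [show 2 - z = (1 - z) + 1 by ring, Gamma_add_one _ h1z,
    show (π : ℂ) * (1 - z) = π - π * z by ring, sin_pi_sub, ← mul_one_sub]
  field_simp
  rw [Gamma_mul_Gamma_one_sub, mul_comm z, div_mul_cancel₀ _ hsin]

lemma inv_norm_Gamma_le_of_re_mem_Icc {b : ℝ} {z : ℂ} (hz : z.im ≠ 0)
    (hre : z.re ∈ Set.Icc (2 - b) (3 / 2)) :
    ‖Gamma z‖⁻¹ ≤ max (Real.Gamma (1 / 2)) (Real.Gamma b) * Real.exp (π * |z.im|) := by
  have hre' : (2 - z).re ∈ Set.Icc (1 / 2 : ℝ) b := by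
    rw [sub_re, re_ofNat]; constructor <;> linarith [hre.1, hre.2]
  have hGamma : ‖Gamma (2 - z)‖ ≤ max (Real.Gamma (1 / 2)) (Real.Gamma b) :=
    (norm_Gamma_le_Gamma_re_s16 (by linarith [hre'.1])).trans <|
      Real.convexOn_Gamma.le_on_segment (by norm_num) (show 0 < b by linarith [hre'.1, hre'.2])
        (segment_eq_Icc (hre'.1.trans hre'.2) ▸ hre')
  have hsin : ‖sin (π * (1 - z)) / (π * (1 - z))‖ ≤ Real.exp (π * |z.im|) := by
    simpa [abs_mul, abs_of_pos Real.pi_pos] using norm_sin_div_self_le (π * (1 - z))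
  rw [← norm_inv, inv_Gamma_eq_Gamma_two_sub_mul hz, norm_mul]
  exact mul_le_mul hGamma hsin (norm_nonneg _) ((norm_nonneg _).trans hGamma)

lemma inv_norm_Gamma_le_two_pow_of_re_mem_Icc {b : ℝ} (hb : 3 / 2 ≤ b) (n : ℕ) {z : ℂ}
    (hz : z.im ≠ 0) (hre : z.re ∈ Set.Icc (2 - b) (n + 3 / 2)) :
    ‖Gamma z‖⁻¹ ≤ 2 ^ n * max (Real.Gamma (1 / 2)) (Real.Gamma b) * Real.exp (π * |z.im|) := by
  induction n generalizing z with
  | zero => simpa using inv_norm_Gamma_le_of_re_mem_Icc hz (by simpa using hre)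
  | succ n ih =>
    by_cases hlow : z.re ≤ n + 3 / 2
    · calc ‖Gamma z‖⁻¹
          ≤ 2 ^ n * max (Real.Gamma (1 / 2)) (Real.Gamma b) * Real.exp (π * |z.im|) :=
            ih hz ⟨hre.1, hlow⟩
        _ ≤ 2 ^ (n + 1) * max (Real.Gamma (1 / 2)) (Real.Gamma b) * Real.exp (π * |z.im|) := by
            have hK : 0 ≤ max (Real.Gamma (1 / 2)) (Real.Gamma b) :=
              le_max_of_le_left (Real.Gamma_pos_of_pos (by norm_num)).le
            gcongr <;> norm_num
    · have him : (z - 1).im = z.im := by simp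
      have hre₁ : (z - 1).re = z.re - 1 := by simp
      have hz₁ : z - 1 ≠ 0 := fun h => hz (by simpa [h] using him.symm)
      have hshift : Gamma z = (z - 1) * Gamma (z - 1) := by
        simpa using Gamma_add_one (z - 1) hz₁
      have hstep : ‖z - 1‖⁻¹ ≤ 2 :=
        inv_le_of_inv_le₀ two_pos (by linarith [re_le_norm (z - 1), not_le.mp hlow])
      have hprev := ih (z := z - 1) (by rwa [him]) (by
        rw [hre₁]; push_cast at hre
        constructor <;> linarith [hre.1, hre.2, not_le.mp hlow])
      rw [him] at hprev
      rw [hshift, norm_mul, mul_inv, pow_succ]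
      calc ‖z - 1‖⁻¹ * ‖Gamma (z - 1)‖⁻¹
          ≤ 2 * (2 ^ n * max (Real.Gamma (1 / 2)) (Real.Gamma b) * Real.exp (π * |z.im|)) :=
            mul_le_mul hstep hprev (inv_nonneg.mpr (norm_nonneg _)) zero_le_two
        _ = 2 ^ n * 2 * max (Real.Gamma (1 / 2)) (Real.Gamma b) * Real.exp (π * |z.im|) := by
            ring

end Complex

/-- The coefficient `d_j²` of `h`. -/
noncomputable def besselCoeff (ν : ℂ) (j : ℕ) : ℂ :=
  2 ^ (-ν - 2 * j) / (j ! * Gamma (j + 1 + ν))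

lemma norm_two_cpow_neg_sub_two_mul (ν : ℂ) (j : ℕ) :
    ‖(2 : ℂ) ^ (-ν - 2 * j)‖ = 2 ^ (-ν.re) / 4 ^ j := by
  rw [show (2 : ℂ) ^ (-ν - 2 * j) = ((2 : ℝ) : ℂ) ^ (-ν - 2 * j) by norm_num,
    Complex.norm_cpow_eq_rpow_re_of_pos two_pos]
  simp only [Complex.sub_re, Complex.neg_re, Complex.mul_re, Complex.re_ofNat, Complex.im_ofNat,
    Complex.natCast_re, Complex.natCast_im, mul_zero, sub_zero]
  rw [Real.rpow_sub two_pos, show (2 : ℝ) * j = ((2 * j : ℕ) : ℝ) by push_cast; ring,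
    Real.rpow_natCast, pow_mul]
  norm_num

lemma exists_norm_besselCoeff_le (μ : ℝ) :
    ∃ A, 0 ≤ A ∧ ∀ s : ℝ, s ≠ 0 → ∀ j : ℕ,
      ‖besselCoeff (μ + s * I) j‖ ≤ A * Real.exp (π * |s|) * (1 / 2) ^ j / j ! := by
  set K := max (Real.Gamma (1 / 2)) (Real.Gamma (max (3 / 2) (1 - μ)))
  have hK : 0 ≤ K := le_max_of_le_left (Real.Gamma_pos_of_pos (by norm_num)).le
  refine ⟨2 ^ (-μ) * 2 ^ ⌈μ⌉₊ * K, by positivity, fun s hs j => ?_⟩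
  have hre : (j + 1 + (μ + s * I) : ℂ).re = j + 1 + μ := by simp
  have him : (j + 1 + (μ + s * I) : ℂ).im = s := by simp
  have hGamma : ‖Gamma (j + 1 + (μ + s * I))‖⁻¹ ≤ 2 ^ (j + ⌈μ⌉₊) * K * Real.exp (π * |s|) := by
    have := inv_norm_Gamma_le_two_pow_of_re_mem_Icc (le_max_left (3 / 2) (1 - μ))
      (j + ⌈μ⌉₊) (z := j + 1 + (μ + s * I)) (by rwa [him]) (by
        rw [hre]; push_cast
        constructor <;> linarith [le_max_right (3 / 2 : ℝ) (1 - μ), j.cast_nonneg (α := ℝ),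
          Nat.le_ceil μ])
    rwa [him] at this
  calc ‖besselCoeff (μ + s * I) j‖
      = 2 ^ (-μ) / 4 ^ j / j ! * ‖Gamma (j + 1 + (μ + s * I))‖⁻¹ := by
        rw [besselCoeff, norm_div, norm_mul, norm_two_cpow_neg_sub_two_mul, Complex.norm_natCast]
        simp
        ring
    _ ≤ 2 ^ (-μ) / 4 ^ j / j ! * (2 ^ (j + ⌈μ⌉₊) * K * Real.exp (π * |s|)) := by gcongr
    _ = 2 ^ (-μ) * 2 ^ ⌈μ⌉₊ * K * Real.exp (π * |s|) * (1 / 2) ^ j / j ! := by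
        rw [pow_add, show (4 : ℝ) ^ j = 2 ^ j * 2 ^ j by rw [← mul_pow]; norm_num,
          one_div, inv_pow]
        field_simp

theorem series_h_deriv_bound (μ : ℝ) (p : ℕ) :
    ∃ C : ℝ, ∀ s : ℝ, s ≠ 0 → ∀ r : ℝ, 0 < r → r ≤ 1 →
      ‖iteratedDeriv p
        (fun r : ℝ => ∑' j : ℕ,
          (2 : ℂ) ^ (-((μ : ℂ) + s * Complex.I) - 2 * j)
            / ((j : ℕ).factorial * Complex.Gamma ((j : ℂ) + 1 + ((μ : ℂ) + s * Complex.I)))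
            * (r : ℂ) ^ j) r‖
        ≤ C * Real.exp (Real.pi * |s|) := by
  obtain ⟨A, hA, hcoeff⟩ := exists_norm_besselCoeff_le μ
  refine ⟨A * (1 / 2) ^ p * Real.exp (1 / 2), fun s hs r hr0 hr1 => ?_⟩
  change ‖iteratedDeriv p (realPowerSeries (besselCoeff (μ + s * I))) r‖ ≤ _
  calc _ ≤ A * Real.exp (π * |s|) * (1 / 2) ^ p * Real.exp (1 / 2 * |r|) :=
        norm_iteratedDeriv_realPowerSeries_le (hcoeff s hs) p r
    _ ≤ A * Real.exp (π * |s|) * (1 / 2) ^ p * Real.exp (1 / 2) := by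
        gcongr; rw [abs_of_pos hr0]; linarith
    _ = A * (1 / 2) ^ p * Real.exp (1 / 2) * Real.exp (π * |s|) := by ring
end

section
/- Fix μ real, c > 0, and ν = μ + is with s real, s ≠ 0. Define g(r) = Σ_{j≥1} d_j¹ C_j Σ_{l=0}^{j-1} C(2j,2l+1) r^l, where d_j¹ = 2^{ν-2j}/(j! Γ(j+1-ν)) and |C_j| ≤ c^j. Then for every p ∈ ℕ and 0 < r ≤ 1, |∂_r^p g(r)| ≤ C e^{π|s|} with C depending only on μ, c, and p. -/
/-!
The series is the restriction to `(0, 1]` of an entire function `g`, so Cauchy's estimate on the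
unit circle around `r` bounds `g⁽ᵖ⁾(r)` by `p!` times the maximum of `|g|` on `|z| ≤ 2`. On
`|z| ≤ B` the `j`-th term is at most `M e^{π|s|} (2cB)^{j+1} / (j+1)!`: the odd binomial sum is at
most `(8B)^{j+1}`, `|2^{ν-2(j+1)}| = 2^μ 4^{-(j+1)}`, and `1/|Γ(j+2-ν)| ≤ M e^{π|s|}` uniformly in
`j`. For a fixed real part, the last bound comes from the reflection formula
`1/Γ(z) = Γ(1-z) sin(πz)/π` with `|sin(πz)| ≤ e^{π|Im z|}`; uniformity in `j` holds because
`|Γ(w+1)| = |w| |Γ(w)| ≥ |Γ(w)|` once `Re w ≥ 1`, which leaves finitely many `j`.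
-/

open Complex

theorem Complex.norm_Gamma_le_Gamma_re_s17 {z : ℂ} (hz : 0 < z.re) :
    ‖Gamma z‖ ≤ Real.Gamma z.re := by
  rw [Gamma_eq_integral hz, Real.Gamma_eq_integral hz, GammaIntegral]
  refine (MeasureTheory.norm_integral_le_integral_norm _).trans_eq ?_
  refine MeasureTheory.setIntegral_congr_fun measurableSet_Ioi fun x (hx : 0 < x) => ?_
  rw [norm_mul, norm_real, Real.norm_eq_abs, norm_cpow_eq_rpow_re_of_pos hx]
  simp [abs_of_pos (Real.exp_pos _)]

theorem Complex.norm_sin_le_exp_abs_im (z : ℂ) : ‖sin z‖ ≤ Real.exp |z.im| := by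
  have h₁ : ‖exp (-z * I)‖ ≤ Real.exp |z.im| := by
    rw [norm_exp]; exact Real.exp_le_exp.2 (by simpa using le_abs_self z.im)
  have h₂ : ‖exp (z * I)‖ ≤ Real.exp |z.im| := by
    rw [norm_exp]; exact Real.exp_le_exp.2 (by simpa using neg_le_abs z.im)
  rw [sin, norm_div, norm_mul, norm_I, mul_one, Complex.norm_two]
  linarith [norm_sub_le (exp (-z * I)) (exp (z * I))]

theorem Complex.norm_Gamma_le_norm_Gamma_add_nat {w : ℂ} (hw : ∀ k : ℕ, 1 ≤ ‖w + k‖) (n : ℕ) :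
    ‖Gamma w‖ ≤ ‖Gamma (w + n)‖ := by
  induction n with
  | zero => simp
  | succ n ih =>
    have hne : w + n ≠ 0 := norm_pos_iff.1 (one_pos.trans_le (hw n))
    rw [Nat.cast_succ, ← add_assoc, Gamma_add_one _ hne, norm_mul]
    exact ih.trans (le_mul_of_one_le_left (norm_nonneg _) (hw n))

theorem Complex.Gamma_ne_zero_of_im_ne_zero {z : ℂ} (hz : z.im ≠ 0) : Gamma z ≠ 0 :=
  Gamma_ne_zero fun m h => hz (by simp [h])

theorem Complex.exists_inv_norm_Gamma_le_mul_exp (x : ℝ) :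
    ∃ M, ∀ y : ℝ, ‖Gamma (x + y * I)‖⁻¹ ≤ M * Real.exp (Real.pi * |y|) := by
  have hcont : Continuous fun y : ℝ => (Gamma (x + y * I))⁻¹ :=
    differentiable_one_div_Gamma.continuous.comp (by fun_prop)
  obtain ⟨M₁, hM₁⟩ := (isCompact_Icc (a := (-1 : ℝ)) (b := 1)).exists_bound_of_continuousOn
    hcont.continuousOn
  have hM₁0 : 0 ≤ M₁ := (norm_nonneg _).trans (hM₁ 0 (by norm_num))
  set m := ⌈x⌉₊
  have hm : 0 < 1 - x + m := by linarith [Nat.le_ceil x]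
  refine ⟨max M₁ (Real.Gamma (1 - x + m)), fun y => ?_⟩
  have hexp : 1 ≤ Real.exp (Real.pi * |y|) := Real.one_le_exp (by positivity)
  rcases le_or_gt |y| 1 with hy | hy
  · calc ‖Gamma (x + y * I)‖⁻¹ ≤ M₁ := by simpa using hM₁ y (abs_le.1 hy)
      _ ≤ max M₁ (Real.Gamma (1 - x + m)) * Real.exp (Real.pi * |y|) :=
        (le_max_left _ _).trans (le_mul_of_one_le_right (hM₁0.trans (le_max_left _ _)) hexp)
  set z : ℂ := x + y * I
  have hy0 : y ≠ 0 := by rintro rfl; norm_num at hy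
  have hrefl : ‖Gamma z‖⁻¹ = ‖Gamma (1 - z)‖ * ‖sin (Real.pi * z)‖ / Real.pi := by
    have hz : Gamma z ≠ 0 := Gamma_ne_zero_of_im_ne_zero (by simpa [z] using hy0)
    have hz' : Gamma (1 - z) ≠ 0 := Gamma_ne_zero_of_im_ne_zero (by simpa [z] using hy0)
    have h : (Gamma z)⁻¹ = Gamma (1 - z) * sin (Real.pi * z) / Real.pi := by
      rw [← div_div_eq_mul_div, ← Gamma_mul_Gamma_one_sub z]
      field_simp
    rw [← norm_inv, h, norm_div, norm_mul, norm_real, Real.norm_of_nonneg Real.pi_pos.le]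
  have hΓ : ‖Gamma (1 - z)‖ ≤ Real.Gamma (1 - x + m) := by
    calc ‖Gamma (1 - z)‖ ≤ ‖Gamma (1 - z + m)‖ :=
          norm_Gamma_le_norm_Gamma_add_nat (fun k => by
            refine hy.le.trans ((abs_im_le_norm _).trans_eq' ?_); simp [z]) m
      _ ≤ Real.Gamma (1 - x + m) := by
          simpa [z] using norm_Gamma_le_Gamma_re_s17 (z := 1 - z + m) (by simpa [z] using hm)
  have hsin : ‖sin (Real.pi * z)‖ ≤ Real.exp (Real.pi * |y|) := by
    simpa [z, abs_mul, abs_of_pos Real.pi_pos] using norm_sin_le_exp_abs_im (Real.pi * z)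
  calc ‖Gamma z‖⁻¹ = ‖Gamma (1 - z)‖ * ‖sin (Real.pi * z)‖ / Real.pi := hrefl
    _ ≤ ‖Gamma (1 - z)‖ * ‖sin (Real.pi * z)‖ :=
        div_le_self (by positivity) (by linarith [Real.pi_gt_three])
    _ ≤ max M₁ (Real.Gamma (1 - x + m)) * Real.exp (Real.pi * |y|) :=
        mul_le_mul (hΓ.trans (le_max_right _ _)) hsin (norm_nonneg _)
          ((Real.Gamma_pos_of_pos hm).le.trans (le_max_right _ _))

theorem Complex.exists_inv_norm_Gamma_add_nat_le_mul_exp (a : ℝ) :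
    ∃ M, ∀ (n : ℕ) (y : ℝ), ‖Gamma (a + n + y * I)‖⁻¹ ≤ M * Real.exp (Real.pi * |y|) := by
  choose Mf hMf using exists_inv_norm_Gamma_le_mul_exp
  set N := ⌈1 - a⌉₊
  have hN : 1 ≤ a + N := by linarith [Nat.le_ceil (1 - a)]
  set M := (Finset.range (N + 1)).sup' Finset.nonempty_range_add_one fun k => Mf (a + k)
  have hMf' : ∀ k ≤ N, ∀ y : ℝ, ‖Gamma (a + k + y * I)‖⁻¹ ≤ M * Real.exp (Real.pi * |y|) :=
    fun k hk y => calc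
      ‖Gamma (a + k + y * I)‖⁻¹ ≤ Mf (a + k) * Real.exp (Real.pi * |y|) := by
        simpa using hMf (a + k) y
      _ ≤ M * Real.exp (Real.pi * |y|) := by
        gcongr
        exact Finset.le_sup' (fun k : ℕ => Mf (a + k)) (Finset.mem_range_succ_iff.2 hk)
  refine ⟨M, fun n y => ?_⟩
  rcases le_total n N with hn | hn
  · exact hMf' n hn y
  -- beyond `N` the real part is at least `1`, and `‖Γ‖` only grows along `w, w + 1, w + 2, …`
  set w : ℂ := a + N + y * I
  have hw : a + n + y * I = w + (n - N : ℕ) := by simp only [w, Nat.cast_sub hn]; ring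
  have hwre : w.re = a + N := by simp [w]
  have hgrow : ‖Gamma w‖ ≤ ‖Gamma (a + n + y * I)‖ :=
    hw ▸ norm_Gamma_le_norm_Gamma_add_nat (fun k => (re_le_norm _).trans'
      (by rw [add_re, hwre, natCast_re]; linarith [(k.cast_nonneg : (0 : ℝ) ≤ k)])) _
  have hw0 : 0 < ‖Gamma w‖ := norm_pos_iff.2 (Gamma_ne_zero_of_re_pos (by rw [hwre]; linarith))
  exact (inv_anti₀ hw0 hgrow).trans (hMf' N le_rfl y)

/-- The paper's `d_{j+1}¹`, with `ν = μ + i s`. -/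
noncomputable def coeffD (ν : ℂ) (j : ℕ) : ℂ :=
  (2 : ℂ) ^ (ν - 2 * (j + 1)) / ((j + 1).factorial * Gamma ((j + 1) + 1 - ν))

def oddChoosePoly (j : ℕ) (z : ℂ) : ℂ :=
  ∑ l ∈ Finset.range (j + 1), (Nat.choose (2 * (j + 1)) (2 * l + 1) : ℂ) * z ^ l

theorem norm_two_cpow_sub (ν : ℂ) (j : ℕ) :
    ‖(2 : ℂ) ^ (ν - 2 * (j + 1))‖ = 2 ^ ν.re / 4 ^ (j + 1) := by
  rw [show (2 : ℂ) = (2 : ℝ) by norm_num, norm_cpow_eq_rpow_re_of_pos two_pos]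
  have hre : (ν - (2 : ℝ) * (j + 1)).re = ν.re - (2 * (j + 1) : ℕ) := by simp
  rw [hre, Real.rpow_sub two_pos, Real.rpow_natCast, pow_mul]
  norm_num

theorem exists_norm_coeffD_le (μ : ℝ) :
    ∃ M, ∀ (s : ℝ) (j : ℕ),
      ‖coeffD (μ + s * I) j‖ ≤ M * Real.exp (Real.pi * |s|) / (4 ^ (j + 1) * (j + 1).factorial) := by
  obtain ⟨M, hM⟩ := Complex.exists_inv_norm_Gamma_add_nat_le_mul_exp (2 - μ)
  refine ⟨2 ^ μ * M, fun s j => ?_⟩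
  have hΓ : ‖Gamma ((j + 1) + 1 - (μ + s * I))‖⁻¹ ≤ M * Real.exp (Real.pi * |s|) := by
    have h := hM j (-s)
    rwa [abs_neg, show ((2 - μ : ℝ) : ℂ) + j + (-s : ℝ) * I = (j + 1) + 1 - (μ + s * I) by
      push_cast; ring] at h
  rw [coeffD, norm_div, norm_mul, norm_two_cpow_sub, norm_natCast,
    show ((μ : ℂ) + s * I).re = μ by simp]
  calc _ = 2 ^ μ * ‖Gamma ((j + 1) + 1 - (μ + s * I))‖⁻¹ / (4 ^ (j + 1) * (j + 1).factorial) := by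
        ring
    _ ≤ _ := by rw [mul_assoc]; gcongr

theorem norm_oddChoosePoly_le {B : ℝ} (hB : 1 ≤ B) {z : ℂ} (hz : ‖z‖ ≤ B) (j : ℕ) :
    ‖oddChoosePoly j z‖ ≤ (8 * B) ^ (j + 1) := by
  calc ‖oddChoosePoly j z‖ ≤ ∑ _l ∈ Finset.range (j + 1), 4 ^ (j + 1) * B ^ (j + 1) := by
        refine (norm_sum_le _ _).trans (Finset.sum_le_sum fun l hl => ?_)
        rw [norm_mul, norm_pow, norm_natCast]
        gcongr
        · exact_mod_cast (Nat.choose_le_two_pow _ _).trans_eq (by rw [pow_mul]; norm_num)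
        · exact (pow_le_pow_left₀ (norm_nonneg z) hz l).trans
            (pow_le_pow_right₀ hB (Finset.mem_range.1 hl).le)
    _ = (j + 1 : ℕ) * (4 ^ (j + 1) * B ^ (j + 1)) := by simp
    _ ≤ 2 ^ (j + 1) * (4 ^ (j + 1) * B ^ (j + 1)) := by
        gcongr; exact_mod_cast Nat.lt_two_pow_self.le
    _ = (8 * B) ^ (j + 1) := by rw [← mul_pow, ← mul_pow, ← mul_assoc]; norm_num

theorem differentiable_oddChoosePoly (j : ℕ) : Differentiable ℂ (oddChoosePoly j) := by
  unfold oddChoosePoly; fun_prop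

noncomputable def gTerm (ν : ℂ) (C : ℕ → ℂ) (j : ℕ) (z : ℂ) : ℂ :=
  coeffD ν j * C (j + 1) * oddChoosePoly j z

/-- The paper's `g`, extended to complex arguments. -/
noncomputable def gSeries (ν : ℂ) (C : ℕ → ℂ) (z : ℂ) : ℂ :=
  ∑' j, gTerm ν C j z

theorem norm_gTerm_le {ν : ℂ} {C : ℕ → ℂ} {K c B : ℝ}
    (hK : ∀ j, ‖coeffD ν j‖ ≤ K / (4 ^ (j + 1) * (j + 1).factorial)) (hC : ∀ j, ‖C j‖ ≤ c ^ j)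
    (hB : 1 ≤ B) {z : ℂ} (hz : ‖z‖ ≤ B) (j : ℕ) :
    ‖gTerm ν C j z‖ ≤ K * ((2 * c * B) ^ (j + 1) / (j + 1).factorial) := by
  have hK0 := (norm_nonneg _).trans (hK j)
  have hc0 := (norm_nonneg _).trans (hC (j + 1))
  rw [gTerm, norm_mul, norm_mul]
  calc _ ≤ K / (4 ^ (j + 1) * (j + 1).factorial) * c ^ (j + 1) * (8 * B) ^ (j + 1) :=
        mul_le_mul (mul_le_mul (hK j) (hC _) (norm_nonneg _) hK0) (norm_oddChoosePoly_le hB hz j)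
          (norm_nonneg _) (mul_nonneg hK0 hc0)
    _ = _ := by rw [show (8 : ℝ) * B = 4 * (2 * B) by ring, mul_pow]; field_simp; ring

theorem summable_pow_succ_div_factorial (x : ℝ) :
    Summable fun j : ℕ => x ^ (j + 1) / (j + 1).factorial :=
  (summable_nat_add_iff 1).2 (Real.summable_pow_div_factorial x)

theorem differentiable_tsum_of_forall_norm_le {ι E : Type*} [NormedAddCommGroup E]
    [NormedSpace ℂ E] [CompleteSpace E] {f : ι → ℂ → E} (hf : ∀ i, Differentiable ℂ (f i))
    (u : ℝ → ι → ℝ) (hu : ∀ R, Summable (u R)) (hfu : ∀ R i z, ‖z‖ ≤ R → ‖f i z‖ ≤ u R i) :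
    Differentiable ℂ fun z => ∑' i, f i z := fun z =>
  (differentiableOn_tsum_of_summable_norm (hu (‖z‖ + 1)) (fun i => (hf i).differentiableOn)
    Metric.isOpen_ball fun i w hw => hfu _ i w (mem_ball_zero_iff.1 hw).le).differentiableAt
    (Metric.isOpen_ball.mem_nhds (by simp))

theorem norm_gSeries_le {ν : ℂ} {C : ℕ → ℂ} {K c B : ℝ}
    (hK : ∀ j, ‖coeffD ν j‖ ≤ K / (4 ^ (j + 1) * (j + 1).factorial)) (hC : ∀ j, ‖C j‖ ≤ c ^ j)
    (hB : 1 ≤ B) {z : ℂ} (hz : ‖z‖ ≤ B) :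
    ‖gSeries ν C z‖ ≤ K * ∑' j : ℕ, (2 * c * B) ^ (j + 1) / (j + 1).factorial :=
  (tsum_of_norm_bounded ((summable_pow_succ_div_factorial _).mul_left K).hasSum
    (norm_gTerm_le hK hC hB hz)).trans_eq tsum_mul_left

theorem differentiable_gSeries {ν : ℂ} {C : ℕ → ℂ} {K c : ℝ}
    (hK : ∀ j, ‖coeffD ν j‖ ≤ K / (4 ^ (j + 1) * (j + 1).factorial)) (hC : ∀ j, ‖C j‖ ≤ c ^ j) :
    Differentiable ℂ (gSeries ν C) :=
  differentiable_tsum_of_forall_norm_le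
    (fun j => (differentiable_oddChoosePoly j).const_mul _)
    (fun R j => K * ((2 * c * max 1 R) ^ (j + 1) / (j + 1).factorial))
    (fun _ => (summable_pow_succ_div_factorial _).mul_left K)
    (fun R j _ hz => norm_gTerm_le hK hC (le_max_left 1 R) (hz.trans (le_max_right 1 R)) j)

theorem iteratedDeriv_comp_ofReal {f : ℂ → ℂ} (hf : Differentiable ℂ f) (n : ℕ) (x : ℝ) :
    iteratedDeriv n (fun t : ℝ => f t) x = iteratedDeriv n f x := by
  induction n generalizing x with
  | zero => simp
  | succ n ih =>
    have hD : Differentiable ℂ (iteratedDeriv n f) :=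
      (hf.contDiff (n := ⊤)).differentiable_iteratedDeriv n (WithTop.coe_lt_top _)
    rw [iteratedDeriv_succ, iteratedDeriv_succ, funext ih]
    exact (hD x).hasDerivAt.comp_ofReal.deriv

theorem series_g_deriv_bound_general (μ c : ℝ) (p : ℕ) :
    ∃ C : ℝ, ∀ Cseq : ℕ → ℂ, (∀ j : ℕ, ‖Cseq j‖ ≤ c ^ j) →
      ∀ s : ℝ, s ≠ 0 → ∀ r : ℝ, 0 < r → r ≤ 1 →
        ‖(iteratedDeriv p
          (fun r : ℝ => ∑' j : ℕ,
            (2 : ℂ) ^ (((μ : ℂ) + s * Complex.I) - 2 * (j + 1))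
              / (((j + 1 : ℕ)).factorial
                  * Complex.Gamma (((j : ℂ) + 1) + 1 - ((μ : ℂ) + s * Complex.I)))
              * Cseq (j + 1)
              * ∑ l ∈ Finset.range (j + 1),
                  (Nat.choose (2 * (j + 1)) (2 * l + 1) : ℂ) * (r : ℂ) ^ l) r)‖
          ≤ C * Real.exp (Real.pi * |s|) := by
  obtain ⟨M, hM⟩ := exists_norm_coeffD_le μ
  refine ⟨p.factorial * (M * ∑' j : ℕ, (2 * c * 2) ^ (j + 1) / (j + 1).factorial),
    fun Cseq hC s _ r hr hr1 => ?_⟩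
  have hK := hM s
  have hsphere : ∀ z ∈ Metric.sphere (r : ℂ) 1, ‖gSeries (μ + s * I) Cseq z‖ ≤
      M * Real.exp (Real.pi * |s|) * ∑' j : ℕ, (2 * c * 2) ^ (j + 1) / (j + 1).factorial := by
    intro z hz
    refine norm_gSeries_le hK hC one_le_two ?_
    calc ‖z‖ ≤ ‖(r : ℂ)‖ + ‖z - r‖ := norm_le_norm_add_norm_sub' z r
      _ ≤ 2 := by rw [mem_sphere_iff_norm.1 hz, norm_real, Real.norm_of_nonneg hr.le]; linarith
  change ‖iteratedDeriv p (fun t : ℝ => gSeries (μ + s * I) Cseq t) r‖ ≤ _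
  rw [iteratedDeriv_comp_ofReal (differentiable_gSeries hK hC)]
  calc _ ≤ _ := norm_iteratedDeriv_le_of_forall_mem_sphere_norm_le p one_pos
        (differentiable_gSeries hK hC).diffContOnCl hsphere
    _ = _ := by ring

theorem series_g_deriv_bound (μ c : ℝ) (hc : 0 < c) (p : ℕ) :
    ∃ C : ℝ, ∀ Cseq : ℕ → ℂ, (∀ j : ℕ, ‖Cseq j‖ ≤ c ^ j) →
      ∀ s : ℝ, s ≠ 0 → ∀ r : ℝ, 0 < r → r ≤ 1 →
        ‖(iteratedDeriv p
          (fun r : ℝ => ∑' j : ℕ,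
            (2 : ℂ) ^ (((μ : ℂ) + s * Complex.I) - 2 * (j + 1))
              / (((j + 1 : ℕ)).factorial
                  * Complex.Gamma (((j : ℂ) + 1) + 1 - ((μ : ℂ) + s * Complex.I)))
              * Cseq (j + 1)
              * ∑ l ∈ Finset.range (j + 1),
                  (Nat.choose (2 * (j + 1)) (2 * l + 1) : ℂ) * (r : ℂ) ^ l) r)‖
          ≤ C * Real.exp (Real.pi * |s|) :=
  series_g_deriv_bound_general μ c p
end

section
/- For the hyperbolic change of variable τ = cosh r - 1, one has ∂_τ = (1/sinh r) ∂_r, and for every p ∈ ℕ there is C_p such that |∂_τ^p (1/sinh r)| ≤ C_p r^{-(2p+1)} for 0 < r ≤ 1 and |∂_τ^p (1/sinh r)| ≤ C_p (sinh r)^{-p-1} for r ≥ 1. -/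
/-!
Since `∂_τ (cosh r) = 1` and `∂_τ (sinh r) ^ (-k) = -k cosh r / sinh r ^ (k + 2)`, induction on `p`
gives `∂_τ^p (1 / sinh r) = g_p (cosh r) / sinh r ^ (2p + 1)` for a real polynomial `g_p` of degree
at most `p`. Hence `|∂_τ^p (1 / sinh r)| ≤ C cosh r ^ p / sinh r ^ (2p + 1)`, and it remains to use
`cosh r ≤ 2`, `r ≤ sinh r` for `r ≤ 1` and `cosh r ≤ 2 sinh r` for `r ≥ 1`.
-/

/-- The operator `∂_τ = (1/sinh r) ∂_r` acting on functions of `r`. -/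
noncomputable def dTau (f : ℝ → ℝ) : ℝ → ℝ :=
  fun r => (1 / Real.sinh r) * deriv f r

open Polynomial

noncomputable def dTauInvSinhPoly : ℕ → ℝ[X]
  | 0 => 1
  | p + 1 => derivative (dTauInvSinhPoly p) * (X ^ 2 - 1)
      - C (2 * (p : ℝ) + 1) * (X * dTauInvSinhPoly p)

lemma natDegree_dTauInvSinhPoly_le (p : ℕ) : (dTauInvSinhPoly p).natDegree ≤ p := by
  induction p with
  | zero => simp [dTauInvSinhPoly]
  | succ p ih =>
    have hX : ((X : ℝ[X]) ^ 2 - 1).natDegree ≤ 2 := by compute_degree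
    have hderiv : (derivative (dTauInvSinhPoly p) * (X ^ 2 - 1)).natDegree ≤ p + 1 := by
      rcases Nat.eq_zero_or_pos (dTauInvSinhPoly p).natDegree with h0 | hpos
      · simp [derivative_of_natDegree_zero h0]
      · have := natDegree_derivative_le (dTauInvSinhPoly p)
        exact (natDegree_mul_le_of_le le_rfl hX).trans (by omega)
    have hmul : (C (2 * (p : ℝ) + 1) * (X * dTauInvSinhPoly p)).natDegree ≤ p + 1 :=
      (natDegree_C_mul_le _ _).trans
        ((natDegree_mul_le_of_le natDegree_X_le ih).trans (by omega))
    exact (natDegree_sub_le_of_le hderiv hmul).trans (max_self _).le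

lemma iterate_dTau_inv_sinh (p : ℕ) {r : ℝ} (hr : 0 < r) :
    dTau^[p] (fun r => 1 / Real.sinh r) r
      = (dTauInvSinhPoly p).eval (Real.cosh r) / Real.sinh r ^ (2 * p + 1) := by
  induction p generalizing r with
  | zero => simp [dTauInvSinhPoly]
  | succ p ih =>
    have hs : Real.sinh r ≠ 0 := (Real.sinh_pos_iff.mpr hr).ne'
    have hlocal : dTau^[p] (fun r => 1 / Real.sinh r) =ᶠ[nhds r]
        fun r => (dTauInvSinhPoly p).eval (Real.cosh r) / Real.sinh r ^ (2 * p + 1) := by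
      filter_upwards [Ioi_mem_nhds hr] with x hx using ih hx
    have hnum : HasDerivAt (fun r => (dTauInvSinhPoly p).eval (Real.cosh r))
        ((derivative (dTauInvSinhPoly p)).eval (Real.cosh r) * Real.sinh r) r :=
      ((dTauInvSinhPoly p).hasDerivAt _).comp r (Real.hasDerivAt_cosh r)
    have hden : HasDerivAt (fun r => Real.sinh r ^ (2 * p + 1))
        ((2 * p + 1 : ℕ) * Real.sinh r ^ (2 * p) * Real.cosh r) r :=
      (Real.hasDerivAt_sinh r).pow (2 * p + 1)
    rw [Function.iterate_succ_apply', dTau, hlocal.deriv_eq,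
      (hnum.fun_div hden (pow_ne_zero _ hs)).deriv]
    have hsinh_sq : Real.cosh r ^ 2 - 1 = Real.sinh r ^ 2 := by
      linarith [Real.cosh_sq r]
    simp only [dTauInvSinhPoly, eval_sub, eval_mul, eval_pow, eval_X, eval_C, eval_one, hsinh_sq]
    field_simp
    push_cast
    ring

lemma abs_eval_le_of_one_le {P : ℝ[X]} {n : ℕ} (hn : P.natDegree ≤ n) {x : ℝ} (hx : 1 ≤ x) :
    |P.eval x| ≤ (∑ i ∈ Finset.range (n + 1), |P.coeff i|) * x ^ n := by
  rw [eval_eq_sum_range' (Nat.lt_succ_of_le hn), Finset.sum_mul]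
  refine (Finset.abs_sum_le_sum_abs _ _).trans (Finset.sum_le_sum fun i hi => ?_)
  rw [abs_mul, abs_pow, abs_of_nonneg (zero_le_one.trans hx)]
  exact mul_le_mul_of_nonneg_left
    (pow_le_pow_right₀ hx (Nat.lt_succ_iff.mp (Finset.mem_range.mp hi))) (abs_nonneg _)

lemma abs_iterate_dTau_inv_sinh_le (p : ℕ) {r : ℝ} (hr : 0 < r) :
    |dTau^[p] (fun r => 1 / Real.sinh r) r|
      ≤ (∑ i ∈ Finset.range (p + 1), |(dTauInvSinhPoly p).coeff i|)
        * Real.cosh r ^ p / Real.sinh r ^ (2 * p + 1) := by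
  rw [iterate_dTau_inv_sinh p hr, abs_div, abs_of_pos (pow_pos (Real.sinh_pos_iff.mpr hr) _)]
  gcongr
  exact abs_eval_le_of_one_le (natDegree_dTauInvSinhPoly_le p) (Real.one_le_cosh r)

lemma Real.cosh_le_two {r : ℝ} (hr : |r| ≤ 1) : Real.cosh r ≤ 2 := by
  have hcosh_one : Real.cosh 1 ≤ 2 := by
    rw [Real.cosh_eq]
    linarith [Real.exp_one_lt_d9, Real.exp_lt_one_iff.mpr (neg_one_lt_zero (R := ℝ))]
  exact (Real.cosh_le_cosh.mpr (by rwa [abs_one])).trans hcosh_one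

lemma Real.cosh_le_two_mul_sinh {r : ℝ} (hr : 1 ≤ r) : Real.cosh r ≤ 2 * Real.sinh r := by
  have hexp : Real.exp (-r) ≤ 1 := Real.exp_le_one_iff.mpr (by linarith)
  linarith [Real.cosh_sub_sinh r, Real.self_le_sinh_iff.mpr (zero_le_one.trans hr)]

theorem dTau_inv_sinh_bounds :
    (∀ f : ℝ → ℝ, ∀ r : ℝ, 0 < r → DifferentiableAt ℝ f (Real.cosh r - 1) →
      deriv (fun r : ℝ => f (Real.cosh r - 1)) r
        = Real.sinh r * deriv f (Real.cosh r - 1)) ∧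
    ∀ p : ℕ, ∃ C : ℝ,
      (∀ r : ℝ, 0 < r → r ≤ 1 →
        |dTau^[p] (fun r : ℝ => 1 / Real.sinh r) r| ≤ C * r ^ (-(2 * (p : ℝ) + 1))) ∧
      (∀ r : ℝ, 1 ≤ r →
        |dTau^[p] (fun r : ℝ => 1 / Real.sinh r) r| ≤ C * Real.sinh r ^ (-(p : ℝ) - 1)) := by
  refine ⟨fun f r _ hf => ?_, fun p => ?_⟩
  · exact (hf.hasDerivAt.comp r ((Real.hasDerivAt_cosh r).sub_const 1)).deriv.trans (mul_comm _ _)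
  set S := ∑ i ∈ Finset.range (p + 1), |(dTauInvSinhPoly p).coeff i|
  have hS : 0 ≤ S := Finset.sum_nonneg fun _ _ => abs_nonneg _
  refine ⟨S * 2 ^ p, fun r hr hr1 => ?_, fun r hr1 => ?_⟩
  · have hsinh : r ≤ Real.sinh r := Real.self_le_sinh_iff.mpr hr.le
    have hcosh : Real.cosh r ≤ 2 := Real.cosh_le_two (by rwa [abs_of_pos hr])
    rw [Real.rpow_neg hr.le, ← Nat.cast_ofNat, ← Nat.cast_mul, ← Nat.cast_add_one,
      Real.rpow_natCast, ← div_eq_mul_inv]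
    calc _ ≤ S * Real.cosh r ^ p / Real.sinh r ^ (2 * p + 1) := abs_iterate_dTau_inv_sinh_le p hr
      _ ≤ S * 2 ^ p / r ^ (2 * p + 1) := by gcongr
  · have hr : 0 < r := zero_lt_one.trans_le hr1
    have hs : 0 < Real.sinh r := Real.sinh_pos_iff.mpr hr
    rw [show -(p : ℝ) - 1 = -((p + 1 : ℕ) : ℝ) by push_cast; ring, Real.rpow_neg hs.le,
      Real.rpow_natCast, ← div_eq_mul_inv]
    calc _ ≤ S * Real.cosh r ^ p / Real.sinh r ^ (2 * p + 1) := abs_iterate_dTau_inv_sinh_le p hr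
      _ ≤ S * (2 * Real.sinh r) ^ p / Real.sinh r ^ (2 * p + 1) := by
          gcongr
          exact Real.cosh_le_two_mul_sinh hr1
      _ = S * 2 ^ p / Real.sinh r ^ (p + 1) := by
          field_simp
          ring
end
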